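/- Let w be a uniformly recurrent right-infinite word over a finite alphabet Σ = {x_1, …, x_m} that is not eventually periodic (equivalently, A_w is a projectively simple monomial algebra not of linear growth). Then A_w admits a faithful point module which is not a monomial point module; that is, there is a faithful point A_w-module P = ⊕_{i≥0} F·e_i with action e_i · x_j = λ_{i,j} e_{i+1} such that for some index i at least two of the scalars λ_{i,1}, …, λ_{i,m} are nonzero. -/

import Mathlib

noncomputable section

open scoped BigOperators

/-- The free associative `F`-algebra on `m` generators, realized as the monoid
algebra of the free monoid on `Fin m`. -/
abbrev FreeAlg (F : Type) [Field F] (m : ℕ) : Type :=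
  MonoidAlgebra F (FreeMonoid (Fin m))

variable (F : Type) [Field F] {m : ℕ}

/-- The element of the free algebra corresponding to a word `u`. -/
def wordElem (u : List (Fin m)) : FreeAlg F m :=
  MonoidAlgebra.of F (FreeMonoid (Fin m)) (FreeMonoid.ofList u)

/-- The relation identifying the forbidden words in `W` with `0`. -/
def monRel (W : Set (List (Fin m))) : FreeAlg F m → FreeAlg F m → Prop :=
  fun a b => (∃ u ∈ W, a = wordElem F u) ∧ b = 0

/-- The monomial algebra `F⟨x_1,…,x_m⟩/⟨W⟩` determined by the set `W` of forbidden
words. -/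
abbrev MonAlg (W : Set (List (Fin m))) : Type :=
  RingQuot (monRel F W)

/-- The canonical projection from the free algebra onto the monomial algebra. -/
def monAlgPi (W : Set (List (Fin m))) : FreeAlg F m →ₐ[F] MonAlg F W :=
  RingQuot.mkAlgHom F (monRel F W)

/-- The image of the word `u` in the monomial algebra; `u` is a *nonzero monomial*
of the monomial algebra iff `mono F W u ≠ 0`. -/
def mono (W : Set (List (Fin m))) (u : List (Fin m)) : MonAlg F W :=
  monAlgPi F W (wordElem F u)

/-- The degree-`d` homogeneous component of the monomial algebra, spanned by the
images of the words of length `d`. -/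
def homog (W : Set (List (Fin m))) (d : ℕ) : Submodule F (MonAlg F W) :=
  Submodule.span F { a | ∃ u : List (Fin m), u.length = d ∧ a = mono F W u }
/-- The right action of a single word on the graded vector space `⊕_{i≥0} F·e_i`,
where the letter `x_j` acts by `e_i · x_j = lam i j • e_{i+1}`. -/
def ptAct (lam : ℕ → Fin m → F) : List (Fin m) → ((ℕ →₀ F) →ₗ[F] (ℕ →₀ F))
  | [] => LinearMap.id
  | j :: u => (ptAct lam u).comp (Finsupp.lsum F fun i => lam i j • Finsupp.lsingle (i + 1))

/-- The linear extension of the right action to the whole free algebra. -/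
def algAct (lam : ℕ → Fin m → F) (a : FreeAlg F m) : (ℕ →₀ F) →ₗ[F] (ℕ →₀ F) :=
  Finsupp.sum a.coeff fun u c => c • ptAct F lam (FreeMonoid.toList u)

/-- The basis vector `e_i` of the point module. -/
def eVec (i : ℕ) : ℕ →₀ F := Finsupp.single i 1

/-- The scalar data `lam` defines a (right) point module over the monomial algebra
with forbidden words `W`: the action of the free algebra descends to the quotient,
and the module is generated by `e_0`.  (The homogeneous components `F·e_i` are
one-dimensional by construction.) -/
structure IsPointModule (W : Set (List (Fin m))) (lam : ℕ → Fin m → F) : Prop where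
  welldef : ∀ a : FreeAlg F m, monAlgPi F W a = 0 → algAct F lam a = 0
  cyclic : ∀ v : ℕ →₀ F, ∃ a : FreeAlg F m, algAct F lam a (eVec F 0) = v

/-- The point module given by `lam` is faithful: the only element of the monomial
algebra annihilating it is `0`. -/
def IsFaithfulPM (W : Set (List (Fin m))) (lam : ℕ → Fin m → F) : Prop :=
  ∀ a : FreeAlg F m, algAct F lam a = 0 → monAlgPi F W a = 0

/-- The annihilator in the monomial algebra of the point module given by `lam`. -/
def annSet (W : Set (List (Fin m))) (lam : ℕ → Fin m → F) : Set (MonAlg F W) :=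
  { x | ∀ a : FreeAlg F m, monAlgPi F W a = x → algAct F lam a = 0 }
/-- The set of finite factors (subwords) of the right-infinite word `w`. -/
def factorsOf (w : ℕ → Fin m) : Set (List (Fin m)) :=
  { u | ∃ i : ℕ, u = (List.range u.length).map fun k => w (i + k) }

/-- `w` is uniformly recurrent: every factor `u` of `w` occurs in every sufficiently
long factor of `w`. -/
def UniformlyRecurrent (w : ℕ → Fin m) : Prop :=
  ∀ u ∈ factorsOf w, ∃ C : ℕ, ∀ v ∈ factorsOf w, v.length = C → u <:+: v

/-- `w` is eventually periodic. -/
def EventuallyPeriodic (w : ℕ → Fin m) : Prop :=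
  ∃ p : ℕ, 0 < p ∧ ∃ N : ℕ, ∀ i : ℕ, N ≤ i → w (i + p) = w i

/-!
As `w` is not eventually periodic, it has left special factors of every length: otherwise its
factor complexity stops growing, which forces every factor of some length `n` to have a unique
right extension, and then `w` is eventually periodic by the pigeonhole principle. Choosing a pair
of left extensions `A ≠ B` that occurs infinitely often, Kőnig's lemma gives an infinite word `c` such
that `A p` and `B p` are factors of `w` for every prefix `p` of `c`.

In the point module where `e_0` goes to `e_1` under both `A` and `B` and `e_{i+1}` then moves only
along the letter `c i`, a word acts nonzero only if it is a factor of `w`. By uniform recurrence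
every factor `u` of `w` occurs in `c`, say at position `t`, and then `u` is the only word of its
length that does not kill `e_{t+1}`; this separates the monomials and gives faithfulness.
-/

section Words

variable {α : Type*}

def factorAt (w : ℕ → α) (i n : ℕ) : List α :=
  (List.range n).map fun k => w (i + k)

@[simp]
lemma length_factorAt (w : ℕ → α) (i n : ℕ) : (factorAt w i n).length = n := by
  simp [factorAt]

@[simp]
lemma getElem_factorAt (w : ℕ → α) (i n k : ℕ) (hk : k < (factorAt w i n).length) :
    (factorAt w i n)[k] = w (i + k) := by
  simp [factorAt]

lemma factorAt_add (w : ℕ → α) (i p q : ℕ) :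
    factorAt w i (p + q) = factorAt w i p ++ factorAt w (i + p) q := by
  simp only [factorAt, List.range_add, List.map_append, List.map_map, Function.comp_def,
    Nat.add_assoc]

lemma factorAt_succ (w : ℕ → α) (i n : ℕ) :
    factorAt w i (n + 1) = factorAt w i n ++ [w (i + n)] := by
  rw [factorAt_add]
  simp [factorAt]

lemma factorAt_succ' (w : ℕ → α) (i n : ℕ) :
    factorAt w i (n + 1) = w i :: factorAt w (i + 1) n := by
  rw [Nat.add_comm n, factorAt_add]
  simp [factorAt]

lemma exists_eq_factorAt_of_infix {w : ℕ → α} {u : List α} {i n : ℕ}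
    (h : u <:+: factorAt w i n) : ∃ k, u = factorAt w (i + k) u.length := by
  obtain ⟨s, t, hst⟩ := h
  have hn : n = s.length + u.length + t.length := by
    simpa [Nat.add_assoc] using (congrArg List.length hst).symm
  rw [hn, factorAt_add, factorAt_add] at hst
  exact ⟨s.length, List.append_inj_right' (List.append_inj_left' hst (by simp)) (by simp)⟩

theorem exists_forall_factorAt_of_prefix_closed [Finite α] {Q : List α → Prop}
    (hQ : ∀ u v, u <+: v → Q v → Q u) (hlen : ∀ n, ∃ u, u.length = n ∧ Q u) :
    ∃ c : ℕ → α, ∀ n, Q (factorAt c 0 n) := by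
  let β : ℕ → Type _ := fun n => {u : List α // u.length = n ∧ Q u}
  have : ∀ n, Finite (β n) := fun n =>
    ((List.finite_length_eq α n).subset fun _ hu => hu.1).to_subtype
  have : ∀ n, Nonempty (β n) := fun n => let ⟨u, hu⟩ := hlen n; ⟨⟨u, hu⟩⟩
  obtain ⟨f, hf⟩ := exists_seq_forall_proj_of_forall_finite (α := β)
    (fun {i _} hij b => ⟨b.1.take i, by simp [b.2.1, hij], hQ _ _ (List.take_prefix _ _) b.2.2⟩)
    (fun _ b => Subtype.ext (List.take_of_length_le b.2.1.le))
    (fun _ _ _ hij _ b => Subtype.ext (by simp [List.take_take, min_eq_left hij]))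
    (fun _ _ => Set.toFinite _)
  let c : ℕ → α := fun k => (f (k + 1)).1[k]'(by simp [(f (k + 1)).2.1])
  refine ⟨c, fun n => ?_⟩
  convert (f n).2.2
  refine List.ext_getElem (by simp [(f n).2.1]) fun k hk hk' => ?_
  have hprefix : (f n).1.take (k + 1) = (f (k + 1)).1 :=
    congrArg Subtype.val (hf (by simpa using hk : k + 1 ≤ n))
  rw [getElem_factorAt, Nat.zero_add, ← List.getElem_take (j := k + 1) (h := by simpa using hk')]
  exact (List.getElem_of_eq hprefix _).symm

end Words

section Factors

variable {w : ℕ → Fin m}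

lemma factorAt_mem_factorsOf (w : ℕ → Fin m) (i n : ℕ) : factorAt w i n ∈ factorsOf w :=
  ⟨i, by rw [length_factorAt]; rfl⟩

lemma mem_factorsOf_of_infix {u v : List (Fin m)} (h : u <:+: v) (hv : v ∈ factorsOf w) :
    u ∈ factorsOf w := by
  obtain ⟨i, hv⟩ := hv
  rw [hv] at h
  obtain ⟨k, hk⟩ := exists_eq_factorAt_of_infix h
  exact ⟨i + k, hk⟩

lemma eventuallyPeriodic_of_factorAt_determines_next {n : ℕ}
    (h : ∀ i j, factorAt w i n = factorAt w j n → w (i + n) = w (j + n)) :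
    EventuallyPeriodic w := by
  obtain ⟨i, j, hij, heq⟩ := (List.finite_length_eq (Fin m) n).exists_lt_map_eq_of_forall_mem
    (f := fun i => factorAt w i n) fun i => length_factorAt w i n
  have hshift : ∀ k, factorAt w (i + k) n = factorAt w (j + k) n := by
    intro k
    induction k with
    | zero => exact heq
    | succ k ih =>
      have hlong : factorAt w (i + k) (n + 1) = factorAt w (j + k) (n + 1) := by
        rw [factorAt_succ, factorAt_succ, ih, h _ _ ih]
      rw [factorAt_succ', factorAt_succ'] at hlong
      exact List.tail_eq_of_cons_eq hlong
  refine ⟨j - i, by omega, i + n, fun t ht => ?_⟩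
  have := h _ _ (hshift (t - n - i))
  rwa [show i + (t - n - i) + n = t by omega, show j + (t - n - i) + n = t + (j - i) by omega,
    eq_comm] at this

def IsLeftSpecial (w : ℕ → Fin m) (u : List (Fin m)) : Prop :=
  ∃ x y, x ≠ y ∧ x :: u ∈ factorsOf w ∧ y :: u ∈ factorsOf w

-- With no left special factor of length `n`, deleting the first letter is injective on factors
-- of length `n + 1`; so there are no more of them than of length `n`, and deleting the last
-- letter, which maps them onto the factors of length `n`, is injective as well.
lemma factorAt_determines_next_of_not_isLeftSpecial {n : ℕ}
    (h : ∀ u : List (Fin m), u.length = n → ¬ IsLeftSpecial w u) (i j : ℕ)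
    (hij : factorAt w i n = factorAt w j n) : w (i + n) = w (j + n) := by
  set S : ℕ → Set (List (Fin m)) := fun k => Set.range fun i => factorAt w i k
  have hfin : ∀ k, (S k).Finite := fun k =>
    (List.finite_length_eq (Fin m) k).subset (by rintro _ ⟨i, rfl⟩; simp)
  have hdrop : List.dropLast '' S (n + 1) = S n := by
    ext u
    simp [S, factorAt_succ]
  have htail_inj : Set.InjOn List.tail (S (n + 1)) := by
    rintro _ ⟨i, rfl⟩ _ ⟨j, rfl⟩ htail
    simp only [factorAt_succ', List.tail_cons] at htail ⊢
    by_contra hne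
    refine h _ (length_factorAt w (i + 1) n) ⟨w i, w j, fun hw => hne (by rw [hw, htail]), ?_, ?_⟩
    · exact factorAt_succ' w i n ▸ factorAt_mem_factorsOf w i (n + 1)
    · exact htail ▸ factorAt_succ' w j n ▸ factorAt_mem_factorsOf w j (n + 1)
  have htail_maps : Set.MapsTo List.tail (S (n + 1)) (S n) := by
    rintro _ ⟨i, rfl⟩
    exact ⟨i + 1, by simp [factorAt_succ']⟩
  have hcard : (S (n + 1)).ncard ≤ (S n).ncard :=
    Set.ncard_le_ncard_of_injOn _ htail_maps htail_inj (hfin n)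
  have hdrop_inj : Set.InjOn List.dropLast (S (n + 1)) :=
    Set.injOn_of_ncard_image_eq (le_antisymm (Set.ncard_image_le (hfin _)) (hdrop ▸ hcard))
      (hfin _)
  have := hdrop_inj ⟨i, rfl⟩ ⟨j, rfl⟩ (by simp [factorAt_succ, hij])
  simpa [factorAt_succ, hij] using this

lemma exists_isLeftSpecial (hnp : ¬ EventuallyPeriodic w) (n : ℕ) :
    ∃ u : List (Fin m), u.length = n ∧ IsLeftSpecial w u := by
  by_contra! h
  exact hnp (eventuallyPeriodic_of_factorAt_determines_next
    (factorAt_determines_next_of_not_isLeftSpecial h))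

end Factors

lemma exists_left_special_branch {w : ℕ → Fin m} (hnp : ¬ EventuallyPeriodic w) :
    ∃ (c : ℕ → Fin m) (A B : Fin m), A ≠ B ∧
      ∀ n, A :: factorAt c 0 n ∈ factorsOf w ∧ B :: factorAt c 0 n ∈ factorsOf w := by
  choose u hlen X Y hXY hX hY using exists_isLeftSpecial hnp
  obtain ⟨⟨A, B⟩, hfiber⟩ := Finite.exists_infinite_fiber fun n => (X n, Y n)
  have hAB : ∀ N, ∃ n, N ≤ n ∧ X n = A ∧ Y n = B := fun N =>
    let ⟨n, hn, hNn⟩ := (Set.infinite_coe_iff.1 hfiber).exists_gt N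
    ⟨n, hNn.le, (Prod.ext_iff.1 hn).1, (Prod.ext_iff.1 hn).2⟩
  have hprefix : ∀ u v : List (Fin m), u <+: v →
      (A :: v ∈ factorsOf w ∧ B :: v ∈ factorsOf w) →
      A :: u ∈ factorsOf w ∧ B :: u ∈ factorsOf w := fun u v huv hv =>
    ⟨mem_factorsOf_of_infix (List.cons_prefix_cons.2 ⟨rfl, huv⟩).isInfix hv.1,
      mem_factorsOf_of_infix (List.cons_prefix_cons.2 ⟨rfl, huv⟩).isInfix hv.2⟩
  obtain ⟨c, hc⟩ := exists_forall_factorAt_of_prefix_closed hprefix fun N => by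
    obtain ⟨n, hNn, rfl, rfl⟩ := hAB N
    exact ⟨(u n).take N, by simp [hlen, hNn], hprefix _ _ (List.take_prefix _ _) ⟨hX n, hY n⟩⟩
  obtain ⟨n, -, rfl, rfl⟩ := hAB 0
  exact ⟨c, X n, Y n, hXY n, hc⟩

section PointModule

variable {F}

def wordCoeff (lam : ℕ → Fin m → F) : ℕ → List (Fin m) → F
  | _, [] => 1
  | i, j :: u => lam i j * wordCoeff lam (i + 1) u

lemma ptAct_single (lam : ℕ → Fin m → F) (u : List (Fin m)) (i : ℕ) (t : F) :
    ptAct F lam u (Finsupp.single i t) = wordCoeff lam i u • Finsupp.single (i + u.length) t := by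
  induction u generalizing i with
  | nil => simp [ptAct, wordCoeff]
  | cons j u ih =>
    rw [ptAct, LinearMap.comp_apply, Finsupp.lsum_single, LinearMap.smul_apply,
      Finsupp.lsingle_apply, map_smul, ih, smul_smul, wordCoeff, List.length_cons,
      Nat.add_right_comm, Nat.add_assoc]

lemma ptAct_eq_zero {lam : ℕ → Fin m → F} {u : List (Fin m)} (h : ∀ i, wordCoeff lam i u = 0) :
    ptAct F lam u = 0 :=
  Finsupp.lhom_ext fun i t => by rw [ptAct_single, h i, zero_smul, LinearMap.zero_apply]

lemma algAct_single_apply (lam : ℕ → Fin m → F) (a : FreeAlg F m) (i k : ℕ) :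
    algAct F lam a (Finsupp.single i 1) k = a.coeff.sum fun x c =>
      if i + (FreeMonoid.toList x).length = k then c * wordCoeff lam i (FreeMonoid.toList x)
      else 0 := by
  simp only [algAct, LinearMap.finsupp_sum_apply, Finsupp.sum_apply, LinearMap.smul_apply,
    ptAct_single, smul_smul, Finsupp.smul_apply, Finsupp.single_apply, smul_eq_mul, mul_ite,
    mul_one, mul_zero]

def actHom (lam : ℕ → Fin m → F) : FreeAlg F m →ₐ[F] (Module.End F (ℕ →₀ F))ᵐᵒᵖ :=
  MonoidAlgebra.lift F _ (FreeMonoid (Fin m)) (FreeMonoid.lift fun j => .op (ptAct F lam [j]))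

lemma actHom_apply (lam : ℕ → Fin m → F) (a : FreeAlg F m) :
    actHom lam a = .op (algAct F lam a) := by
  have hword : ∀ u : List (Fin m), (u.map fun j => MulOpposite.op (ptAct F lam [j])).prod =
      .op (ptAct F lam u) := by
    intro u
    induction u with
    | nil => rfl
    | cons j u ih => rw [List.map_cons, List.prod_cons, ih, ← MulOpposite.op_mul]; rfl
  simp [actHom, MonoidAlgebra.lift_apply, algAct, MulOpposite.op_finsuppSum, FreeMonoid.lift_apply,
    hword]

lemma actHom_wordElem (lam : ℕ → Fin m → F) (u : List (Fin m)) :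
    actHom lam (wordElem F u) = .op (ptAct F lam u) := by
  rw [actHom_apply, wordElem, MonoidAlgebra.of_apply, algAct, MonoidAlgebra.coeff_single,
    Finsupp.sum_single_index (by simp), one_smul, FreeMonoid.toList_ofList]

variable {W : Set (List (Fin m))} {lam : ℕ → Fin m → F}

lemma algAct_eq_unop (a : FreeAlg F m) : algAct F lam a = (actHom lam a).unop := by
  rw [actHom_apply, MulOpposite.unop_op]

lemma single_eq_smul_wordElem (x : FreeMonoid (Fin m)) (c : F) :
    (MonoidAlgebra.single x c : FreeAlg F m) = c • wordElem F (FreeMonoid.toList x) := by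
  rw [wordElem, FreeMonoid.ofList_toList, MonoidAlgebra.of_apply, MonoidAlgebra.smul_single',
    mul_one]

lemma mono_eq_zero_of_mem {u : List (Fin m)} (hu : u ∈ W) : mono F W u = 0 :=
  (RingQuot.mkAlgHom_rel F ⟨⟨u, hu, rfl⟩, rfl⟩).trans (map_zero _)

lemma algAct_eq_zero_of_monAlgPi_eq_zero (hW : ∀ u ∈ W, ∀ i, wordCoeff lam i u = 0)
    {a : FreeAlg F m} (ha : monAlgPi F W a = 0) : algAct F lam a = 0 := by
  have hresp : ∀ ⦃x y⦄, monRel F W x y → actHom lam x = actHom lam y := by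
    rintro _ _ ⟨⟨u, hu, rfl⟩, rfl⟩
    rw [actHom_wordElem, ptAct_eq_zero (hW u hu), map_zero, MulOpposite.op_zero]
  have := RingQuot.liftAlgHom_mkAlgHom_apply F (actHom lam) hresp a
  rw [← monAlgPi, ha, map_zero, actHom_apply, eq_comm, MulOpposite.op_eq_zero_iff] at this
  exact this

lemma exists_algAct_eVec_zero_eq (hreach : ∀ n, ∃ u : List (Fin m), u.length = n ∧
    wordCoeff lam 0 u ≠ 0) (v : ℕ →₀ F) : ∃ a : FreeAlg F m, algAct F lam a (eVec F 0) = v := by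
  induction v using Finsupp.induction with
  | zero => exact ⟨0, by simp [algAct]⟩
  | single_add n t v _ _ ih =>
    obtain ⟨a, rfl⟩ := ih
    obtain ⟨u, rfl, hu⟩ := hreach n
    refine ⟨(t / wordCoeff lam 0 u) • wordElem F u + a, ?_⟩
    simp only [algAct_eq_unop, map_add, map_smul, actHom_wordElem, MulOpposite.unop_add,
      MulOpposite.unop_smul, MulOpposite.unop_op, LinearMap.add_apply, LinearMap.smul_apply, eVec,
      ptAct_single, Nat.zero_add, Finsupp.smul_single, smul_eq_mul, mul_one, div_mul_cancel₀ _ hu]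

lemma isPointModule_of (hW : ∀ u ∈ W, ∀ i, wordCoeff lam i u = 0)
    (hreach : ∀ n, ∃ u : List (Fin m), u.length = n ∧ wordCoeff lam 0 u ≠ 0) :
    IsPointModule F W lam :=
  ⟨fun _ => algAct_eq_zero_of_monAlgPi_eq_zero hW, exists_algAct_eVec_zero_eq hreach⟩

lemma monAlgPi_eq_zero_of_coeff {a : FreeAlg F m}
    (h : ∀ x, FreeMonoid.toList x ∉ W → a.coeff x = 0) : monAlgPi F W a = 0 := by
  rw [← MonoidAlgebra.sum_coeff_single a, map_finsuppSum]
  refine Finset.sum_eq_zero fun x _ => ?_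
  dsimp only
  by_cases hx : FreeMonoid.toList x ∈ W
  · rw [single_eq_smul_wordElem, map_smul, ← mono, mono_eq_zero_of_mem hx, smul_zero]
  · rw [h x hx, MonoidAlgebra.single_zero, map_zero]

-- Apply `a` to `e_i` and read off the coefficient of `e_{i + |u|}`.
lemma isFaithfulPM_of_separating (hsep : ∀ u ∉ W, ∃ i, wordCoeff lam i u ≠ 0 ∧
    ∀ v : List (Fin m), v.length = u.length → v ≠ u → wordCoeff lam i v = 0) :
    IsFaithfulPM F W lam := by
  intro a ha
  refine monAlgPi_eq_zero_of_coeff fun x hx => ?_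
  obtain ⟨i, hx_ne, hsep_x⟩ := hsep _ hx
  have hcoeff := algAct_single_apply lam a i (i + (FreeMonoid.toList x).length)
  rw [ha, LinearMap.zero_apply, Finsupp.coe_zero, Pi.zero_apply, Finsupp.sum_eq_single x] at hcoeff
  · simpa [hx_ne] using hcoeff.symm
  · intro y _ hyx
    split_ifs with hlen
    · rw [hsep_x (FreeMonoid.toList y) (by omega) fun h => hyx (FreeMonoid.toList.injective h),
        mul_zero]
    · rfl
  · simp

end PointModule

section Fork

variable {w c : ℕ → Fin m}

lemma factorAt_mem_factorsOf_of_prefixes (hc : ∀ n, factorAt c 0 n ∈ factorsOf w) (t n : ℕ) :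
    factorAt c t n ∈ factorsOf w :=
  mem_factorsOf_of_infix (List.infix_append _ _ []) <| by
    simpa [factorAt_add] using hc (t + n)

lemma exists_eq_factorAt_of_uniformlyRecurrent (hur : UniformlyRecurrent w)
    (hc : ∀ n, factorAt c 0 n ∈ factorsOf w) {u : List (Fin m)} (hu : u ∈ factorsOf w) :
    ∃ t, u = factorAt c t u.length := by
  obtain ⟨C, hC⟩ := hur u hu
  simpa using exists_eq_factorAt_of_infix (hC _ (hc C) (length_factorAt c 0 C))

variable {F}

def forkLam (c : ℕ → Fin m) (A B : Fin m) : ℕ → Fin m → F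
  | 0, j => if j = A ∨ j = B then 1 else 0
  | i + 1, j => if j = c i then 1 else 0

variable {A B : Fin m}

lemma wordCoeff_forkLam_succ (t : ℕ) (u : List (Fin m)) :
    wordCoeff (forkLam c A B : ℕ → Fin m → F) (t + 1) u =
      if u = factorAt c t u.length then 1 else 0 := by
  induction u generalizing t with
  | nil => simp [wordCoeff, factorAt]
  | cons j u ih =>
    rw [wordCoeff, forkLam, ih, ite_zero_mul_ite_zero, mul_one, List.length_cons, factorAt_succ']
    simp only [List.cons_eq_cons]

lemma wordCoeff_forkLam_zero_cons (j : Fin m) (u : List (Fin m)) :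
    wordCoeff (forkLam c A B : ℕ → Fin m → F) 0 (j :: u) =
      if (j = A ∨ j = B) ∧ u = factorAt c 0 u.length then 1 else 0 := by
  rw [wordCoeff, forkLam, wordCoeff_forkLam_succ, ite_zero_mul_ite_zero, mul_one]

variable (hc : ∀ n, A :: factorAt c 0 n ∈ factorsOf w ∧ B :: factorAt c 0 n ∈ factorsOf w)
include hc

lemma factorAt_mem_factorsOf_of_fork (t n : ℕ) : factorAt c t n ∈ factorsOf w :=
  factorAt_mem_factorsOf_of_prefixes
    (fun n => mem_factorsOf_of_infix (List.suffix_cons A _).isInfix (hc n).1) t n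

lemma wordCoeff_forkLam_eq_zero {u : List (Fin m)} (hu : u ∉ factorsOf w) (i : ℕ) :
    wordCoeff (forkLam c A B : ℕ → Fin m → F) i u = 0 := by
  cases i with
  | zero =>
    cases u with
    | nil => exact absurd ⟨0, rfl⟩ hu
    | cons j v =>
      rw [wordCoeff_forkLam_zero_cons, if_neg]
      rintro ⟨hj, hv⟩
      rw [hv] at hu
      rcases hj with rfl | rfl
      exacts [hu (hc _).1, hu (hc _).2]
  | succ t =>
    rw [wordCoeff_forkLam_succ, if_neg]
    exact fun h => hu (h ▸ factorAt_mem_factorsOf_of_fork hc t _)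

lemma isPointModule_forkLam : IsPointModule F (factorsOf w)ᶜ (forkLam c A B) := by
  refine isPointModule_of (fun u hu => wordCoeff_forkLam_eq_zero hc hu) fun n => ?_
  cases n with
  | zero => exact ⟨[], rfl, by simp [wordCoeff]⟩
  | succ n => exact ⟨A :: factorAt c 0 n, by simp, by simp [wordCoeff_forkLam_zero_cons]⟩

lemma isFaithfulPM_forkLam (hur : UniformlyRecurrent w) :
    IsFaithfulPM F (factorsOf w)ᶜ (forkLam c A B) := by
  refine isFaithfulPM_of_separating fun u hu => ?_
  obtain ⟨t, ht⟩ := exists_eq_factorAt_of_uniformlyRecurrent hur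
    (factorAt_mem_factorsOf_of_fork hc 0) (Set.not_notMem.1 hu)
  refine ⟨t + 1, by simp [wordCoeff_forkLam_succ, ← ht], fun v hv hvu => ?_⟩
  rw [wordCoeff_forkLam_succ, if_neg (by rwa [hv, ← ht])]

end Fork

/-- If `w` is a uniformly recurrent right-infinite word which is
not eventually periodic, then the monomial algebra `A_w` admits a faithful point
module which is not monomial: for some index `i`, at least two of the scalars
`λ_{i,1},…,λ_{i,m}` are nonzero. -/
theorem statement2 (F : Type) [Field F] (m : ℕ) (w : ℕ → Fin m)
    (hur : UniformlyRecurrent w) (hnp : ¬ EventuallyPeriodic w) :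
    ∃ lam : ℕ → Fin m → F,
      IsPointModule F ((factorsOf w)ᶜ) lam ∧
      IsFaithfulPM F ((factorsOf w)ᶜ) lam ∧
      ∃ (i : ℕ) (j₁ j₂ : Fin m), j₁ ≠ j₂ ∧ lam i j₁ ≠ 0 ∧ lam i j₂ ≠ 0 := by
  obtain ⟨c, A, B, hAB, hc⟩ := exists_left_special_branch hnp
  exact ⟨forkLam c A B, isPointModule_forkLam hc, isFaithfulPM_forkLam hc hur, 0, A, B, hAB,
    by simp [forkLam], by simp [forkLam]⟩
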